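/- Faithful translation of BD_△ NNF formulas into classical logic: define, for NNF formulas of BD_△ (built from the six literal forms p, ¬p, △p, ¬△p, △¬p, ¬△¬p using ∧ and ∨), the classical translation ·^cl with p^cl = p⁺, (¬p)^cl = p⁻, (△p)^cl = p⁺, (△¬p)^cl = p⁻, (¬△p)^cl = ∼p⁺, (¬△¬p)^cl = ∼p⁻, commuting with ∧ and ∨. Then for all NNF formulas φ, χ: φ ⊨_BD χ if and only if φ^cl ⊨_CPL χ^cl. -/
import Mathlib


inductive FV | T | B | N | F
deriving DecidableEq

open FV

def fneg : FV → FV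
  | T => F | F => T | B => B | N => N

def fand : FV → FV → FV
  | T, x => x
  | x, T => x
  | F, _ => F
  | _, F => F
  | B, B => B
  | N, N => N
  | B, N => F
  | N, B => F

def forr : FV → FV → FV
  | F, x => x
  | x, F => x
  | T, _ => T
  | _, T => T
  | B, B => B
  | N, N => N
  | B, N => T
  | N, B => T

def fcirc : FV → FV
  | T => T | F => T | B => F | N => F

def ftri : FV → FV
  | T => T | B => T | N => F | F => F

inductive Fm
  | var : ℕ → Fm
  | neg : Fm → Fm
  | conj : Fm → Fm → Fm
  | disj : Fm → Fm → Fm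
  | circ : Fm → Fm
  | tri : Fm → Fm

def eval (v : ℕ → FV) : Fm → FV
  | .var p => v p
  | .neg φ => fneg (eval v φ)
  | .conj φ χ => fand (eval v φ) (eval v χ)
  | .disj φ χ => forr (eval v φ) (eval v χ)
  | .circ φ => fcirc (eval v φ)
  | .tri φ => ftri (eval v φ)

/-- designated values -/
def desig (x : FV) : Prop := x = T ∨ x = B

/-- formulas over {¬,∧,∨} -/
def isBD : Fm → Prop
  | .var _ => True
  | .neg φ => isBD φ
  | .conj φ χ => isBD φ ∧ isBD χ
  | .disj φ χ => isBD φ ∧ isBD χ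
  | .circ _ => False
  | .tri _ => False

/-- formulas over {¬,∧,∨,∘} -/
def isCircFm : Fm → Prop
  | .var _ => True
  | .neg φ => isCircFm φ
  | .conj φ χ => isCircFm φ ∧ isCircFm χ
  | .disj φ χ => isCircFm φ ∧ isCircFm χ
  | .circ φ => isCircFm φ
  | .tri _ => False

/-- formulas over {¬,∧,∨,△} -/
def isTriFm : Fm → Prop
  | .var _ => True
  | .neg φ => isTriFm φ
  | .conj φ χ => isTriFm φ ∧ isTriFm χ
  | .disj φ χ => isTriFm φ ∧ isTriFm χ
  | .circ _ => False
  | .tri φ => isTriFm φ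

/-- BD entailment between single formulas -/
def ent (φ χ : Fm) : Prop := ∀ v, desig (eval v φ) → desig (eval v χ)

/-- classical (two-valued) evaluation of {¬,∧,∨}-formulas -/
def evalC (b : ℕ → Bool) : Fm → Bool
  | .var p => b p
  | .neg φ => !(evalC b φ)
  | .conj φ χ => evalC b φ && evalC b χ
  | .disj φ χ => evalC b φ || evalC b χ
  | .circ φ => evalC b φ
  | .tri φ => evalC b φ


/-- L△-literals: p, ¬p, △p, ¬△p, △¬p, ¬△¬p -/
inductive TLit
  | pos : ℕ → TLit
  | negl : ℕ → TLit
  | tp : ℕ → TLit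
  | ntp : ℕ → TLit
  | tn : ℕ → TLit
  | ntn : ℕ → TLit
deriving DecidableEq

def tlitEval (v : ℕ → FV) : TLit → FV
  | .pos p => v p
  | .negl p => fneg (v p)
  | .tp p => ftri (v p)
  | .ntp p => fneg (ftri (v p))
  | .tn p => ftri (fneg (v p))
  | .ntn p => fneg (ftri (fneg (v p)))

/-- NNF formulas of BD_triangle -/
inductive NNF
  | lit : TLit → NNF
  | conj : NNF → NNF → NNF
  | disj : NNF → NNF → NNF

def nnfEval (v : ℕ → FV) : NNF → FV
  | .lit l => tlitEval v l
  | .conj φ χ => fand (nnfEval v φ) (nnfEval v χ)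
  | .disj φ χ => forr (nnfEval v φ) (nnfEval v χ)

/-- classical value of the translation ·^cl; a classical valuation assigns
a boolean to each p⁺ (coded (p, true)) and p⁻ (coded (p, false)) -/
def nnfCl (w : ℕ × Bool → Bool) : NNF → Bool
  | .lit (.pos p) => w (p, true)
  | .lit (.negl p) => w (p, false)
  | .lit (.tp p) => w (p, true)
  | .lit (.tn p) => w (p, false)
  | .lit (.ntp p) => !(w (p, true))
  | .lit (.ntn p) => !(w (p, false))
  | .conj φ χ => nnfCl w φ && nnfCl w χ
  | .disj φ χ => nnfCl w φ || nnfCl w χ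


def toW (v : ℕ → FV) : ℕ × Bool → Bool
  | (p, true) => v p = T ∨ v p = B
  | (p, false) => v p = F ∨ v p = B

def toV (w : ℕ × Bool → Bool) (p : ℕ) : FV :=
  match w (p, true), w (p, false) with
  | true, false => T
  | true, true => B
  | false, false => N
  | false, true => F

lemma key (v : ℕ → FV) (ψ : NNF) : nnfCl (toW v) ψ = true ↔ desig (nnfEval v ψ) := by
  induction ψ with
  | lit l =>
    cases l with
    | pos p | negl p | tp p | ntp p | tn p | ntn p =>
      cases h : v p <;>
        simp [nnfCl, nnfEval, tlitEval, toW, desig, h, fneg, ftri]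
  | conj a b iha ihb =>
    cases ha : nnfEval v a <;> cases hb : nnfEval v b <;>
      simp_all [nnfCl, nnfEval, desig, fand]
  | disj a b iha ihb =>
    cases ha : nnfEval v a <;> cases hb : nnfEval v b <;>
      simp_all [nnfCl, nnfEval, desig, forr]

lemma toW_toV (w : ℕ × Bool → Bool) : toW (toV w) = w := by
  funext x
  obtain ⟨p, b⟩ := x
  cases b <;> cases h1 : w (p, true) <;> cases h2 : w (p, false) <;>
    simp [toW, toV, h1, h2]

theorem nnf_bd_entails_iff_cpl (φ χ : NNF) :
    (∀ v : ℕ → FV, desig (nnfEval v φ) → desig (nnfEval v χ)) ↔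
    (∀ w : ℕ × Bool → Bool, nnfCl w φ = true → nnfCl w χ = true) := by
  constructor
  · intro h w hw
    have := h (toV w)
    rw [← key, ← key, toW_toV] at this
    exact this hw
  · intro h v hv
    rw [← key] at hv ⊢
    exact h _ hv
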